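/- Suppose v ∈ C¹(ℝ²) satisfies ∫_{ℝ²} |∇v|^p dx < ∞ for some p ∈ (2,∞). Then sup_{R ≥ 1} R^{2-p} ∫_0^{2π} |v(R cos θ, R sin θ)|^p dθ < ∞. -/

import Mathlib

/-!
Fix a direction `ω` on the unit circle. By the fundamental theorem of calculus along the ray
`r ↦ v (r ω)` and Hölder's inequality for `|∇v| = (r^{1/p} |∇v|) · r^{-1/p}` on `[1, R]`,
`|v (R ω)|^p ≤ 2^{p-1} |v ω|^p + c_p R^{p-2} ∫_1^R |∇v (r ω)|^p r dr`,
the power `R^{p-2}` being `(∫_1^R r^{-1/(p-1)} dr)^{p-1}` up to a constant; this is where `p > 2`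
enters. Integrating in `ω`, polar coordinates bound the last term by `c_p R^{p-2} ∫ |∇v|^p`.
The angular integration is carried out with lower Lebesgue integrals, so that Tonelli's theorem
applies without knowing that the radial integrals are finite.
-/

noncomputable section
open MeasureTheory Real

/-- The plane `ℝ²` with the Euclidean norm. -/
abbrev Plane := EuclideanSpace ℝ (Fin 2)

/-- The point of the plane with Cartesian coordinates `(a, b)`. -/
def pt (a b : ℝ) : Plane := WithLp.toLp 2 ![a, b]

open Set

theorem ContinuousOn.memLp_restrict_of_isCompact {X E : Type*} [TopologicalSpace X]
    [MeasurableSpace X] [OpensMeasurableSpace X] {μ : Measure X} [IsFiniteMeasureOnCompacts μ]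
    [NormedAddCommGroup E] {f : X → E} {K : Set X}
    (hK : IsCompact K) (hKm : MeasurableSet K) (hf : ContinuousOn f K) (p : ENNReal) :
    MemLp f p (μ.restrict K) := by
  have : IsFiniteMeasure (μ.restrict K) := isFiniteMeasure_restrict.2 hK.measure_lt_top.ne
  obtain ⟨C, hC⟩ := hK.exists_bound_of_continuousOn hf
  refine (memLp_top_of_bound (hf.aestronglyMeasurable_of_isCompact hK hKm) C ?_).mono_exponent
    le_top
  filter_upwards [ae_restrict_mem hKm] with r hr using hC r hr

theorem intervalIntegral_eq_setIntegral_Icc {E : Type*} [NormedAddCommGroup E] [NormedSpace ℝ E]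
    {f : ℝ → E} {a b : ℝ} (hab : a ≤ b) :
    ∫ r in a..b, f r = ∫ r in Icc a b, f r := by
  rw [intervalIntegral.integral_of_le hab, integral_Icc_eq_integral_Ioc]

theorem rpow_intervalIntegral_le_weighted {p a b : ℝ} {G w : ℝ → ℝ} (hp : 1 < p)
    (hab : a ≤ b) (hG : ContinuousOn G (Icc a b)) (hG0 : ∀ r ∈ Icc a b, 0 ≤ G r)
    (hw : ContinuousOn w (Icc a b)) (hw0 : ∀ r ∈ Icc a b, 0 < w r) :
    (∫ r in a..b, G r) ^ p ≤
      (∫ r in a..b, w r ^ (-(p - 1)⁻¹)) ^ (p - 1) * ∫ r in a..b, w r * G r ^ p := by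
  have hpq : p.HolderConjugate (p / (p - 1)) := .conjExponent hp
  have hp0 : 0 < p := by linarith
  have hp1 : p - 1 ≠ 0 := by linarith
  set μ := volume.restrict (Icc a b)
  set f : ℝ → ℝ := fun r ↦ w r ^ p⁻¹ * G r
  set g : ℝ → ℝ := fun r ↦ w r ^ (-p⁻¹)
  have hfg : ∫ r in a..b, G r = ∫ r, f r * g r ∂μ := by
    rw [intervalIntegral_eq_setIntegral_Icc hab]
    refine setIntegral_congr_fun measurableSet_Icc fun r hr ↦ ?_
    simp only [f, g]
    rw [mul_right_comm, ← rpow_add (hw0 r hr), add_neg_cancel, rpow_zero, one_mul]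
  have hfp : ∫ r in a..b, w r * G r ^ p = ∫ r, f r ^ p ∂μ := by
    rw [intervalIntegral_eq_setIntegral_Icc hab]
    refine setIntegral_congr_fun measurableSet_Icc fun r hr ↦ ?_
    simp only [f]
    rw [mul_rpow (rpow_nonneg (hw0 r hr).le _) (hG0 r hr), ← rpow_mul (hw0 r hr).le,
      inv_mul_cancel₀ hp0.ne', rpow_one]
  have hgq : ∫ r in a..b, w r ^ (-(p - 1)⁻¹) = ∫ r, g r ^ (p / (p - 1)) ∂μ := by
    rw [intervalIntegral_eq_setIntegral_Icc hab]
    refine setIntegral_congr_fun measurableSet_Icc fun r hr ↦ ?_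
    simp only [g]
    rw [← rpow_mul (hw0 r hr).le]
    congr 1
    field_simp
  have hf : ContinuousOn f (Icc a b) :=
    (hw.rpow_const fun r _ ↦ Or.inr (by positivity)).mul hG
  have hg : ContinuousOn g (Icc a b) :=
    hw.rpow_const fun r hr ↦ Or.inl (hw0 r hr).ne'
  have hHolder := integral_mul_le_Lp_mul_Lq_of_nonneg hpq
    (ae_restrict_of_forall_mem measurableSet_Icc fun r hr ↦
      mul_nonneg (rpow_nonneg (hw0 r hr).le _) (hG0 r hr))
    (ae_restrict_of_forall_mem measurableSet_Icc fun r hr ↦ rpow_nonneg (hw0 r hr).le _)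
    (hf.memLp_restrict_of_isCompact (μ := volume) isCompact_Icc measurableSet_Icc _)
    (hg.memLp_restrict_of_isCompact (μ := volume) isCompact_Icc measurableSet_Icc _)
  have hX : 0 ≤ ∫ r, f r ^ p ∂μ := setIntegral_nonneg measurableSet_Icc fun r hr ↦
    rpow_nonneg (mul_nonneg (rpow_nonneg (hw0 r hr).le _) (hG0 r hr)) _
  have hY : 0 ≤ ∫ r, g r ^ (p / (p - 1)) ∂μ := setIntegral_nonneg measurableSet_Icc fun r hr ↦
    rpow_nonneg (rpow_nonneg (hw0 r hr).le _) _
  rw [hfg, hfp, hgq, mul_comm]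
  calc (∫ r, f r * g r ∂μ) ^ p
      ≤ ((∫ r, f r ^ p ∂μ) ^ (1 / p) *
          (∫ r, g r ^ (p / (p - 1)) ∂μ) ^ (1 / (p / (p - 1)))) ^ p :=
        rpow_le_rpow (by rw [← hfg]; exact intervalIntegral.integral_nonneg hab hG0) hHolder hp0.le
    _ = _ := by
        rw [mul_rpow (by positivity) (by positivity), ← rpow_mul hX, ← rpow_mul hY,
          one_div_mul_cancel hp0.ne', rpow_one]
        congr 2
        field_simp

theorem rpow_intervalIntegral_rpow_neg_inv_le {p a b : ℝ} (hp : 2 < p) (ha : 0 ≤ a)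
    (hab : a ≤ b) :
    (∫ r in a..b, r ^ (-(p - 1)⁻¹)) ^ (p - 1) ≤ ((p - 2) / (p - 1)) ^ (1 - p) * b ^ (p - 2) := by
  set c := (p - 2) / (p - 1)
  have hc : 0 < c := div_pos (by linarith) (by linarith)
  have hb : 0 ≤ b := ha.trans hab
  have hp1 : p - 1 ≠ 0 := by linarith
  have hexp : -(p - 1)⁻¹ + 1 = c := by simp only [c]; field_simp; ring
  have hint : ∫ r in a..b, r ^ (-(p - 1)⁻¹) = (b ^ c - a ^ c) / c := by
    rw [integral_rpow (Or.inl ?_), hexp]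
    have : (p - 1)⁻¹ < 1 := inv_lt_one_of_one_lt₀ (by linarith)
    linarith
  calc (∫ r in a..b, r ^ (-(p - 1)⁻¹)) ^ (p - 1)
      ≤ (b ^ c / c) ^ (p - 1) := by
        rw [hint]
        gcongr
        · exact div_nonneg (sub_nonneg.2 (rpow_le_rpow ha hab hc.le)) hc.le
        · linarith
        · exact sub_le_self _ (rpow_nonneg ha c)
    _ = c ^ (1 - p) * b ^ (p - 2) := by
        rw [div_rpow (rpow_nonneg hb _) hc.le, ← rpow_mul hb, div_eq_mul_inv, ← rpow_neg hc.le,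
          neg_sub, mul_comm]
        congr 2
        simp only [c]
        field_simp

namespace Real

theorem rpow_add_le_mul_rpow_add_rpow {p a b : ℝ} (ha : 0 ≤ a) (hb : 0 ≤ b) (hp : 1 ≤ p) :
    (a + b) ^ p ≤ 2 ^ (p - 1) * (a ^ p + b ^ p) := by
  lift a to NNReal using ha
  lift b to NNReal using hb
  exact_mod_cast NNReal.rpow_add_le_mul_rpow_add_rpow a b hp

end Real

theorem ofReal_intervalIntegral_eq_setLIntegral {f : ℝ → ℝ} {a b : ℝ} (hab : a ≤ b)
    (hf : IntegrableOn f (Ioc a b)) (hf0 : ∀ x ∈ Ioc a b, 0 ≤ f x) :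
    ENNReal.ofReal (∫ x in a..b, f x) = ∫⁻ x in Ioc a b, ENNReal.ofReal (f x) := by
  rw [intervalIntegral.integral_of_le hab,
    ofReal_integral_eq_lintegral_ofReal hf (ae_restrict_of_forall_mem measurableSet_Ioc hf0)]

theorem ENNReal.le_add_mul_toReal_of_ofReal_le {x y z : ℝ} {e : ENNReal} (hy : 0 ≤ y)
    (hz : 0 ≤ z) (he : e ≠ ⊤)
    (h : ENNReal.ofReal x ≤ ENNReal.ofReal y + ENNReal.ofReal z * e) : x ≤ y + z * e.toReal := by
  rwa [← ENNReal.ofReal_toReal he, ← ENNReal.ofReal_mul hz,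
    ← ENNReal.ofReal_add hy (by positivity), ENNReal.ofReal_le_ofReal_iff (by positivity)] at h

section Radial

variable {E F : Type*} [NormedAddCommGroup E] [NormedSpace ℝ E] [NormedAddCommGroup F]
  [NormedSpace ℝ F] {v : E → F} {u : E}

theorem ContDiff.continuous_fderiv_smul (hv : ContDiff ℝ 1 v) (u : E) :
    Continuous fun r : ℝ ↦ fderiv ℝ v (r • u) :=
  (hv.continuous_fderiv one_ne_zero).comp (continuous_id.smul continuous_const)

theorem norm_sub_le_integral_norm_fderiv_smul (hv : ContDiff ℝ 1 v) (hu : ‖u‖ ≤ 1) {a b : ℝ}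
    (hab : a ≤ b) : ‖v (b • u) - v (a • u)‖ ≤ ∫ r in a..b, ‖fderiv ℝ v (r • u)‖ := by
  have hderiv (r : ℝ) : HasDerivAt (fun s : ℝ ↦ v (s • u)) (fderiv ℝ v (r • u) u) r := by
    have := (hasDerivAt_id r).smul_const u
    rw [one_smul] at this
    exact ((hv.differentiable one_ne_zero) _).hasFDerivAt.comp_hasDerivAt r this
  refine norm_sub_le_integral_of_norm_deriv_le_of_le (f := fun s : ℝ ↦ v (s • u)) hab
    (fun r _ ↦ (hderiv r).continuousAt.continuousWithinAt)
    (fun r _ ↦ (hderiv r).differentiableAt.differentiableWithinAt)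
    (ae_of_all _ fun r _ ↦ ?_) ((hv.continuous_fderiv_smul u).norm.intervalIntegrable a b)
  rw [(hderiv r).deriv]
  exact ((fderiv ℝ v (r • u)).le_opNorm u).trans (mul_le_of_le_one_right (norm_nonneg _) hu)

theorem norm_apply_smul_rpow_le {p R : ℝ} (hp : 2 < p) (hv : ContDiff ℝ 1 v) (hu : ‖u‖ ≤ 1)
    (hR : 1 ≤ R) :
    ‖v (R • u)‖ ^ p ≤ 2 ^ (p - 1) * ‖v u‖ ^ p + 2 ^ (p - 1) * ((p - 2) / (p - 1)) ^ (1 - p) *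
      R ^ (p - 2) * ∫ r in 1..R, r * ‖fderiv ℝ v (r • u)‖ ^ p := by
  set A := ∫ r in 1..R, ‖fderiv ℝ v (r • u)‖
  have hA : 0 ≤ A := intervalIntegral.integral_nonneg hR fun _ _ ↦ norm_nonneg _
  have hdisp : ‖v (R • u)‖ ≤ ‖v u‖ + A := by
    have := norm_sub_le_integral_norm_fderiv_smul hv hu hR
    rw [one_smul] at this
    linarith [norm_sub_norm_le (v (R • u)) (v u)]
  have hHolder : A ^ p ≤ ((p - 2) / (p - 1)) ^ (1 - p) * R ^ (p - 2) *
      ∫ r in 1..R, r * ‖fderiv ℝ v (r • u)‖ ^ p :=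
    (rpow_intervalIntegral_le_weighted (by linarith) hR
      (hv.continuous_fderiv_smul u).norm.continuousOn (fun _ _ ↦ norm_nonneg _)
      continuousOn_id fun r hr ↦ zero_lt_one.trans_le hr.1).trans
    (mul_le_mul_of_nonneg_right (rpow_intervalIntegral_rpow_neg_inv_le hp zero_le_one hR)
      (intervalIntegral.integral_nonneg hR fun r hr ↦
        mul_nonneg (zero_le_one.trans hr.1) (by positivity)))
  calc ‖v (R • u)‖ ^ p ≤ (‖v u‖ + A) ^ p := by gcongr
    _ ≤ 2 ^ (p - 1) * (‖v u‖ ^ p + A ^ p) :=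
        Real.rpow_add_le_mul_rpow_add_rpow (norm_nonneg _) hA (by linarith)
    _ ≤ _ := by rw [mul_add, mul_assoc _ (_ ^ (1 - p)), mul_assoc]; gcongr

theorem ofReal_norm_apply_smul_rpow_le {p R : ℝ} (hp : 2 < p) (hv : ContDiff ℝ 1 v)
    (hu : ‖u‖ ≤ 1) (hR : 1 ≤ R) :
    ENNReal.ofReal (‖v (R • u)‖ ^ p) ≤ ENNReal.ofReal (2 ^ (p - 1)) * ENNReal.ofReal (‖v u‖ ^ p) +
      ENNReal.ofReal (2 ^ (p - 1) * ((p - 2) / (p - 1)) ^ (1 - p) * R ^ (p - 2)) *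
        ∫⁻ r in Ioi 0, ENNReal.ofReal r * ENNReal.ofReal (‖fderiv ℝ v (r • u)‖ ^ p) := by
  set K := 2 ^ (p - 1) * ((p - 2) / (p - 1)) ^ (1 - p) * R ^ (p - 2)
  set g : ℝ → ℝ := fun r ↦ ‖fderiv ℝ v (r • u)‖ ^ p
  have hK : 0 ≤ K := by
    have : 0 < (p - 2) / (p - 1) := div_pos (by linarith) (by linarith)
    positivity
  have hg : Continuous g :=
    (hv.continuous_fderiv_smul u).norm.rpow_const fun _ ↦ Or.inr (by linarith)
  have hg0 (r : ℝ) : 0 ≤ g r := by positivity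
  have hI : 0 ≤ ∫ r in 1..R, r * g r :=
    intervalIntegral.integral_nonneg hR fun r hr ↦ mul_nonneg (zero_le_one.trans hr.1) (hg0 r)
  have hradial : ENNReal.ofReal (∫ r in 1..R, r * g r) ≤
      ∫⁻ r in Ioi 0, ENNReal.ofReal r * ENNReal.ofReal (g r) := by
    have hcont : Continuous fun r ↦ r * g r := continuous_id.mul hg
    rw [ofReal_intervalIntegral_eq_setLIntegral hR hcont.integrableOn_Ioc
      fun r hr ↦ mul_nonneg (zero_le_one.trans hr.1.le) (hg0 r)]
    simp_rw [ENNReal.ofReal_mul' (hg0 _)]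
    exact lintegral_mono_set (Ioc_subset_Ioi_self.trans (Ioi_subset_Ioi zero_le_one))
  calc ENNReal.ofReal (‖v (R • u)‖ ^ p)
      ≤ ENNReal.ofReal (2 ^ (p - 1) * ‖v u‖ ^ p + K * ∫ r in 1..R, r * g r) :=
        ENNReal.ofReal_le_ofReal (norm_apply_smul_rpow_le hp hv hu hR)
    _ = ENNReal.ofReal (2 ^ (p - 1)) * ENNReal.ofReal (‖v u‖ ^ p) +
        ENNReal.ofReal K * ENNReal.ofReal (∫ r in 1..R, r * g r) := by
        rw [ENNReal.ofReal_add (by positivity) (mul_nonneg hK hI),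
          ENNReal.ofReal_mul (by positivity), ENNReal.ofReal_mul hK]
    _ ≤ _ := by grw [hradial]

end Radial

theorem pt_smul (r a b : ℝ) : r • pt a b = pt (r * a) (r * b) := by
  ext i; fin_cases i <;> rfl

theorem norm_pt_cos_sin (θ : ℝ) : ‖pt (cos θ) (sin θ)‖ = 1 := by
  simp [EuclideanSpace.norm_eq, pt, Fin.sum_univ_two]

theorem continuous_pt_cos_sin : Continuous fun θ ↦ pt (cos θ) (sin θ) := by
  unfold pt; fun_prop

theorem measurePreserving_pt : MeasurePreserving (fun s : ℝ × ℝ ↦ pt s.1 s.2) := by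
  have h : (fun s : ℝ × ℝ ↦ pt s.1 s.2) =
      MeasurableEquiv.toLp 2 (Fin 2 → ℝ) ∘ MeasurableEquiv.finTwoArrow.symm := by
    funext s
    ext i
    fin_cases i <;> rfl
  rw [h]
  exact (EuclideanSpace.volume_preserving_symm_measurableEquiv_toLp (Fin 2)).symm.comp
    (volume_preserving_finTwoArrow ℝ).symm

theorem lintegral_plane_eq_polar (f : Plane → ENNReal) (hf : Measurable f) :
    ∫⁻ θ in Ioo (-π) π, ∫⁻ r in Ioi 0, ENNReal.ofReal r * f (r • pt (cos θ) (sin θ)) =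
      ∫⁻ x, f x := by
  have hfpt : Measurable fun s : ℝ × ℝ ↦ f (pt s.1 s.2) :=
    hf.comp measurePreserving_pt.measurable
  rw [← measurePreserving_pt.lintegral_comp hf, ← lintegral_comp_polarCoord_symm,
    polarCoord_target, Measure.volume_eq_prod, ← Measure.prod_restrict, lintegral_prod_symm]
  · simp only [polarCoord_symm_apply, pt_smul, smul_eq_mul]
  · exact (measurable_fst.ennreal_ofReal.mul
      (hfpt.comp continuous_polarCoord_symm.measurable)).aemeasurable

theorem ofReal_integral_circle_rpow_le {p R : ℝ} {v : Plane → ℝ} (hp : 2 < p)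
    (hv : ContDiff ℝ 1 v) (hR : 1 ≤ R) :
    ENNReal.ofReal (∫ θ in (-π)..π, |v (pt (R * cos θ) (R * sin θ))| ^ p) ≤
      ENNReal.ofReal (2 ^ (p - 1) * ∫ θ in (-π)..π, |v (pt (cos θ) (sin θ))| ^ p) +
      ENNReal.ofReal (2 ^ (p - 1) * ((p - 2) / (p - 1)) ^ (1 - p) * R ^ (p - 2)) *
        ∫⁻ x, ENNReal.ofReal (‖fderiv ℝ v x‖ ^ p) := by
  set u : ℝ → Plane := fun θ ↦ pt (cos θ) (sin θ)
  set K := 2 ^ (p - 1) * ((p - 2) / (p - 1)) ^ (1 - p) * R ^ (p - 2)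
  have hcircle (S : ℝ) : Continuous fun θ ↦ |v (S • u θ)| ^ p :=
    ((hv.continuous.comp (continuous_pt_cos_sin.const_smul S)).abs).rpow_const
      fun _ ↦ Or.inr (by linarith)
  have hofReal (S : ℝ) : ENNReal.ofReal (∫ θ in (-π)..π, |v (S • u θ)| ^ p) =
      ∫⁻ θ in Ioo (-π) π, ENNReal.ofReal (|v (S • u θ)| ^ p) := by
    rw [ofReal_intervalIntegral_eq_setLIntegral (by linarith [pi_pos])
      (hcircle S).integrableOn_Ioc fun _ _ ↦ by positivity,
      Measure.restrict_congr_set Ioo_ae_eq_Ioc]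
  have hgrad : Measurable fun x ↦ ENNReal.ofReal (‖fderiv ℝ v x‖ ^ p) :=
    ((hv.continuous_fderiv one_ne_zero).norm.rpow_const
      fun _ ↦ Or.inr (by linarith)).measurable.ennreal_ofReal
  simp_rw [← pt_smul]
  calc ENNReal.ofReal (∫ θ in (-π)..π, |v (R • u θ)| ^ p)
      = ∫⁻ θ in Ioo (-π) π, ENNReal.ofReal (|v (R • u θ)| ^ p) := hofReal R
    _ ≤ ∫⁻ θ in Ioo (-π) π, (ENNReal.ofReal (2 ^ (p - 1)) *
          ENNReal.ofReal (|v ((1 : ℝ) • u θ)| ^ p) + ENNReal.ofReal K *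
          ∫⁻ r in Ioi 0, ENNReal.ofReal r * ENNReal.ofReal (‖fderiv ℝ v (r • u θ)‖ ^ p)) :=
        lintegral_mono fun θ ↦ by
          simpa only [one_smul, Real.norm_eq_abs] using
            ofReal_norm_apply_smul_rpow_le hp hv (norm_pt_cos_sin θ).le hR
    _ = _ := by
        rw [lintegral_add_left ((hcircle 1).measurable.ennreal_ofReal.const_mul _),
          lintegral_const_mul' _ _ ENNReal.ofReal_ne_top,
          lintegral_const_mul' _ _ ENNReal.ofReal_ne_top, lintegral_plane_eq_polar _ hgrad,
          ← hofReal 1, ← ENNReal.ofReal_mul (by positivity)]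
        simp only [one_smul, u]

theorem integral_circle_zero_two_pi_eq (f : Plane → ℝ) (R : ℝ) :
    ∫ θ in (0 : ℝ)..(2 * π), f (pt (R * cos θ) (R * sin θ)) =
      ∫ θ in (-π)..π, f (pt (R * cos θ) (R * sin θ)) := by
  have hperiodic : Function.Periodic (fun θ ↦ f (pt (R * cos θ) (R * sin θ))) (2 * π) :=
    fun θ ↦ by simp only [cos_add_two_pi, sin_add_two_pi]
  simpa [show -π + 2 * π = π by ring] using hperiodic.intervalIntegral_add_eq 0 (-π)

/-- if `v ∈ C¹(ℝ²)` and `∫_{ℝ²} |∇v|^p dx < ∞` for some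
`p ∈ (2,∞)`, then `sup_{R ≥ 1} R^{2-p} ∫_0^{2π} |v(R cos θ, R sin θ)|^p dθ < ∞`. -/
theorem circle_integral_bound_super (p : ℝ) (hp : 2 < p)
    (v : Plane → ℝ) (hv : ContDiff ℝ 1 v)
    (henergy : ∫⁻ x : Plane, ENNReal.ofReal (‖fderiv ℝ v x‖ ^ p) < ⊤) :
    ∃ C : ℝ, ∀ R : ℝ, 1 ≤ R →
      R ^ (2 - p) *
        (∫ θ in (0 : ℝ)..(2 * π), |v (pt (R * Real.cos θ) (R * Real.sin θ))| ^ p)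
        ≤ C := by
  set E := ∫⁻ x : Plane, ENNReal.ofReal (‖fderiv ℝ v x‖ ^ p)
  set C₁ := ∫ θ in (-π)..π, |v (pt (cos θ) (sin θ))| ^ p
  set K := 2 ^ (p - 1) * ((p - 2) / (p - 1)) ^ (1 - p)
  have hK : 0 ≤ K := by
    have : 0 < (p - 2) / (p - 1) := div_pos (by linarith) (by linarith)
    positivity
  have hC₁ : 0 ≤ C₁ :=
    intervalIntegral.integral_nonneg (by linarith [pi_pos]) fun _ _ ↦ by positivity
  refine ⟨2 ^ (p - 1) * C₁ + K * E.toReal, fun R hR ↦ ?_⟩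
  have hR0 : 0 < R := zero_lt_one.trans_le hR
  have hbound := ENNReal.le_add_mul_toReal_of_ofReal_le (by positivity) (by positivity)
    henergy.ne (ofReal_integral_circle_rpow_le hp hv hR)
  rw [integral_circle_zero_two_pi_eq (fun x ↦ |v x| ^ p)]
  calc R ^ (2 - p) * ∫ θ in (-π)..π, |v (pt (R * cos θ) (R * sin θ))| ^ p
      ≤ R ^ (2 - p) * (2 ^ (p - 1) * C₁ + K * R ^ (p - 2) * E.toReal) := by gcongr
    _ = R ^ (2 - p) * (2 ^ (p - 1) * C₁) + K * E.toReal := by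
        have hcancel : R ^ (2 - p) * R ^ (p - 2) = 1 := by rw [← rpow_add hR0]; norm_num
        linear_combination (K * E.toReal) * hcancel
    _ ≤ 2 ^ (p - 1) * C₁ + K * E.toReal := by
        grw [rpow_le_one_of_one_le_of_nonpos hR (by linarith : 2 - p ≤ 0), one_mul]
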